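/- arXiv:solv-int/9610013 — 3 statements merged into one kernel-verified Lean document; each statement's English description precedes it below -/
import Mathlib

section
/- With the domain and operator setup below, let a > 0, let U ∈ B¹_a, and let g : D_a → ℂ be holomorphic with U(t,x)·(−2/t + g(t,x)) = 1 for all (t,x) ∈ D_a with t ≠ 0. Suppose U is a fixed point of the operator ℱ, i.e. ℱU(t,x) = U(t,x) for all (t,x) ∈ D_a. Then the function u(t,x) := −2/t + g(t,x) + ξ′(x) is holomorphic on D_a ∖ {t = 0}, satisfies ∂²u/∂t² = (u − ξ′(x))·(∂u/∂t) + ∂u/∂x there, and for every x with (0,x) ∈ D_a the limit lim_{t→0} [∂u/∂t(t,x) − (1/2)(u(t,x) − ξ′(x))²] exists and equals f(x). -/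
open Complex Set Filter Topology

open Metric MeasureTheory intervalIntegral

/-- The integral `∫₀ᵗ h(τ) dτ` along the straight segment from `0` to `t` in `ℂ`. -/
noncomputable def segInt (h : ℂ → ℂ) (t : ℂ) : ℂ :=
  t * ∫ r in (0 : ℝ)..1, h ((r : ℂ) * t)

/-- The neighbourhood `𝒪_s := {x : dist(x, 𝒪₀) < s·d}` (equal to `𝒪₀` when `s = 0`). -/
def Oset (O₀ : Set ℂ) (d s : ℝ) : Set ℂ :=
  {x : ℂ | x ∈ O₀ ∨ Metric.infDist x O₀ < s * d}

/-- The domain `D_a := {(t,x) : ∃ s ∈ [0,1], |t| < a(1−s) ∧ x ∈ 𝒪_s}`. -/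
def Dset (O₀ : Set ℂ) (d a : ℝ) : Set (ℂ × ℂ) :=
  {p : ℂ × ℂ | ∃ s ∈ Set.Icc (0 : ℝ) 1,
    ‖p.1‖ < a * (1 - s) ∧ p.2 ∈ Oset O₀ d s}

/-- `U ∈ B^K_a` : `U` is holomorphic on `D_a` and `U + t/2 ∈ O²_K(D_a)`. -/
def memB (O₀ : Set ℂ) (d a K : ℝ) (U : ℂ → ℂ → ℂ) : Prop :=
  DifferentiableOn ℂ (fun p : ℂ × ℂ => U p.1 p.2) (Dset O₀ d a) ∧
  ∀ p ∈ Dset O₀ d a, ‖U p.1 p.2 + p.1 / 2‖ ≤ K * ‖p.1‖ ^ 2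

/-- `FU(t,x) := 1/2 + U(t,x)²·(∫₀ᵗ ∂g/∂x(τ,x) dτ + t·ξ″(x) + f(x))`, where
`g` is the holomorphic function with `1/U = −2/t + g` off `{t = 0}`. -/
noncomputable def Fop (ξ f : ℂ → ℂ) (U g : ℂ → ℂ → ℂ) (t x : ℂ) : ℂ :=
  1 / 2 + (U t x) ^ 2 *
    (segInt (fun τ => deriv (fun y => g τ y) x) t + (t * deriv (deriv ξ) x + f x))

/-- `ℱU(t,x) := −∫₀ᵗ FU(τ,x) dτ`. -/
noncomputable def Fcal (ξ f : ℂ → ℂ) (U g : ℂ → ℂ → ℂ) (t x : ℂ) : ℂ :=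
  - segInt (fun τ => Fop ξ f U g τ x) t

lemma isOpen_Oset (O₀ : Set ℂ) (hO₀ : IsOpen O₀) (d s : ℝ) : IsOpen (Oset O₀ d s) :=
  hO₀.union (isOpen_lt (continuous_infDist_pt O₀) continuous_const)

lemma isOpen_Dset (O₀ : Set ℂ) (hO₀ : IsOpen O₀) (d a : ℝ) : IsOpen (Dset O₀ d a) := by
  have : Dset O₀ d a =
      ⋃ s ∈ Set.Icc (0 : ℝ) 1, (Metric.ball (0 : ℂ) (a * (1 - s))) ×ˢ Oset O₀ d s := by
    ext p
    simp [Dset, Metric.mem_ball, Complex.dist_eq, sub_zero, Set.mem_prod, and_comm]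
    tauto
  rw [this]
  exact isOpen_biUnion fun s _ => Metric.isOpen_ball.prod (isOpen_Oset O₀ hO₀ d s)

lemma Dset_balanced {O₀ : Set ℂ} {d a : ℝ} {t x : ℂ} (h : (t, x) ∈ Dset O₀ d a)
    {t' : ℂ} (h' : ‖t'‖ ≤ ‖t‖) : (t', x) ∈ Dset O₀ d a := by
  obtain ⟨s, hs, h1, h2⟩ := h
  exact ⟨s, hs, lt_of_le_of_lt h' h1, h2⟩

lemma Oset_subset_Omega {O₀ : Set ℂ} {d : ℝ} (hd : 0 ≤ d) {s : ℝ} (hs : s ∈ Set.Icc (0:ℝ) 1)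
    {Ωc : Set ℂ} (hcl : closure (Oset O₀ d 1) ⊆ Ωc) {x : ℂ} (hx : x ∈ Oset O₀ d s) : x ∈ Ωc := by
  apply hcl
  apply subset_closure
  rcases hx with hx | hx
  · exact Or.inl hx
  · exact Or.inr (lt_of_lt_of_le hx (by nlinarith [hs.2]))

lemma Dset_snd_mem {O₀ : Set ℂ} {d a : ℝ} (hd : 0 ≤ d) {Ωc : Set ℂ}
    (hcl : closure (Oset O₀ d 1) ⊆ Ωc) {t x : ℂ} (h : (t, x) ∈ Dset O₀ d a) : x ∈ Ωc := by
  obtain ⟨s, hs, _, h2⟩ := h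
  exact Oset_subset_Omega hd hs hcl h2

lemma segInt_hasDerivAt {h : ℂ → ℂ} {S : Set ℂ} (hS : IsOpen S)
    (hbal : ∀ t ∈ S, ∀ r ∈ Set.Icc (0:ℝ) 1, (r : ℂ) * t ∈ S)
    (hh : DifferentiableOn ℂ h S) {t : ℂ} (ht : t ∈ S) :
    HasDerivAt (segInt h) (h t) t := by
  have hana : AnalyticOnNhd ℂ h S := hh.analyticOnNhd hS
  have hdc : ContinuousOn (deriv h) S := (hana.deriv).continuousOn
  have hc : ContinuousOn h S := hh.continuousOn
  have subIoc : Set.uIoc (0:ℝ) 1 ⊆ Set.Icc 0 1 := by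
    rw [Set.uIoc_of_le (by norm_num : (0:ℝ) ≤ 1)]; exact Set.Ioc_subset_Icc_self
  have subIcc : Set.uIcc (0:ℝ) 1 = Set.Icc 0 1 := Set.uIcc_of_le (by norm_num)
  -- thickening of the segment
  have hKc : IsCompact ((fun r : ℝ => (r : ℂ) * t) '' Set.Icc 0 1) :=
    isCompact_Icc.image (by continuity)
  have hKS : (fun r : ℝ => (r : ℂ) * t) '' Set.Icc 0 1 ⊆ S := by
    rintro _ ⟨r, hr, rfl⟩; exact hbal t ht r hr
  obtain ⟨δ, hδ, hth⟩ := hKc.exists_thickening_subset_open hS hKS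
  have hmem : ∀ z ∈ Metric.ball t (δ/2), ∀ r ∈ Set.Icc (0:ℝ) 1, (r : ℂ) * z ∈ S := by
    intro z hz r hr
    apply hth
    rw [Metric.mem_thickening_iff]
    refine ⟨(r : ℂ) * t, ⟨r, hr, rfl⟩, ?_⟩
    have heq : dist ((r:ℂ)*z) ((r:ℂ)*t) = |r| * dist z t := by
      simp [Complex.dist_eq, ← mul_sub, map_mul, Complex.norm_real]
    rw [heq]
    have h1 : |r| ≤ 1 := abs_le.2 ⟨by linarith [hr.1], hr.2⟩
    rw [Metric.mem_ball] at hz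
    calc |r| * dist z t ≤ 1 * dist z t := mul_le_mul_of_nonneg_right h1 dist_nonneg
      _ < δ := by rw [one_mul]; linarith
  have hcont1 : ∀ z ∈ Metric.ball t (δ/2), ContinuousOn (fun r : ℝ => h ((r:ℂ)*z)) (Set.Icc 0 1) :=
    fun z hz => hc.comp ((continuous_ofReal.mul continuous_const).continuousOn)
      (fun r hr => hmem z hz r hr)
  have hcont2 : ∀ z ∈ Metric.ball t (δ/2),
      ContinuousOn (fun r : ℝ => deriv h ((r:ℂ)*z) * (r:ℂ)) (Set.Icc 0 1) :=
    fun z hz => (hdc.comp ((continuous_ofReal.mul continuous_const).continuousOn)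
      (fun r hr => hmem z hz r hr)).mul continuous_ofReal.continuousOn
  have htball : t ∈ Metric.ball t (δ/2) := Metric.mem_ball_self (by linarith)
  -- bound on deriv h over compact
  have hK2c : IsCompact ((fun p : ℝ × ℂ => (p.1 : ℂ) * p.2) ''
      (Set.Icc 0 1 ×ˢ Metric.closedBall t (δ/4))) :=
    (isCompact_Icc.prod (isCompact_closedBall _ _)).image (by continuity)
  have hK2S : (fun p : ℝ × ℂ => (p.1 : ℂ) * p.2) ''
      (Set.Icc 0 1 ×ˢ Metric.closedBall t (δ/4)) ⊆ S := by
    rintro _ ⟨⟨r, z⟩, ⟨hr, hz⟩, rfl⟩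
    exact hmem z (lt_of_le_of_lt (Metric.mem_closedBall.1 hz) (by linarith)) r hr
  obtain ⟨C, hC⟩ := hK2c.exists_bound_of_continuousOn (hdc.mono hK2S)
  -- parametric derivative
  have key := intervalIntegral.hasDerivAt_integral_of_dominated_loc_of_deriv_le
    (F := fun z r => h ((r : ℂ) * z)) (F' := fun z r => deriv h ((r : ℂ) * z) * (r : ℂ))
    (x₀ := t) (bound := fun _ => C) (a := 0) (b := 1) (μ := volume)
    (s := Metric.ball t (δ/4)) (Metric.ball_mem_nhds t (by linarith))
    ?hF_meas ?hF_int ?hF'_meas ?h_bound ?bound_integrable ?h_diff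
  case hF_meas =>
    filter_upwards [Metric.ball_mem_nhds t (show (0:ℝ) < δ/2 by linarith)] with z hz
    exact ((hcont1 z hz).mono subIoc).aestronglyMeasurable measurableSet_uIoc
  case hF_int =>
    apply ContinuousOn.intervalIntegrable
    rw [subIcc]; exact hcont1 t htball
  case hF'_meas =>
    exact ((hcont2 t htball).mono subIoc).aestronglyMeasurable measurableSet_uIoc
  case h_bound =>
    refine Filter.Eventually.of_forall (fun r hr z hz => ?_)
    have hr' : r ∈ Set.Icc (0:ℝ) 1 := subIoc hr
    have hmem2 : (r : ℂ) * z ∈ (fun p : ℝ × ℂ => (p.1 : ℂ) * p.2) ''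
        (Set.Icc 0 1 ×ˢ Metric.closedBall t (δ/4)) :=
      ⟨(r, z), ⟨hr', Metric.mem_closedBall.2 (le_of_lt (Metric.mem_ball.1 hz))⟩, rfl⟩
    have hC0 : 0 ≤ C := le_trans (norm_nonneg (deriv h (((1:ℝ):ℂ) * t)))
      (hC _ ⟨(1, t), ⟨by norm_num, Metric.mem_closedBall_self (by linarith)⟩, rfl⟩)
    calc ‖deriv h ((r:ℂ)*z) * (r:ℂ)‖ = ‖deriv h ((r:ℂ)*z)‖ * |r| := by
          simp [Complex.norm_real]
      _ ≤ C * 1 :=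
          mul_le_mul (hC _ hmem2) (abs_le.2 ⟨by linarith [hr'.1], hr'.2⟩) (abs_nonneg r) hC0
      _ = C := mul_one C
  case bound_integrable => exact intervalIntegrable_const
  case h_diff =>
    refine Filter.Eventually.of_forall (fun r hr z hz => ?_)
    have hr' : r ∈ Set.Icc (0:ℝ) 1 := subIoc hr
    have hd1 : DifferentiableAt ℂ h ((r:ℂ)*z) :=
      hh.differentiableAt (hS.mem_nhds
        (hmem z (lt_of_lt_of_le (Metric.mem_ball.1 hz) (by linarith)) r hr'))
    have hd2 : HasDerivAt (fun w : ℂ => (r : ℂ) * w) (r : ℂ) z := by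
      simpa using (hasDerivAt_id z).const_mul (r : ℂ)
    exact hd1.hasDerivAt.comp z hd2
  obtain ⟨-, hder⟩ := key
  -- product rule
  have hprod : HasDerivAt (fun z => z * ∫ r in (0:ℝ)..1, h ((r:ℂ)*z))
      (1 * (∫ r in (0:ℝ)..1, h ((r:ℂ)*t)) + t * ∫ r in (0:ℝ)..1, deriv h ((r:ℂ)*t) * (r:ℂ)) t :=
    (hasDerivAt_id t).mul hder
  have hval : 1 * (∫ r in (0:ℝ)..1, h ((r:ℂ)*t)) + t * (∫ r in (0:ℝ)..1, deriv h ((r:ℂ)*t) * (r:ℂ))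
      = h t := by
    have hFTC : (∫ r in (0:ℝ)..1, (h ((r:ℂ)*t) + (r:ℂ) * (deriv h ((r:ℂ)*t) * t)))
        = (1:ℂ) * h ((1:ℂ)*t) - (0:ℂ) * h ((0:ℂ)*t) := by
      have hder2 : ∀ r ∈ Set.uIcc (0:ℝ) 1,
          HasDerivAt (fun s : ℝ => (s:ℂ) * h ((s:ℂ)*t))
            (h ((r:ℂ)*t) + (r:ℂ) * (deriv h ((r:ℂ)*t) * t)) r := by
        intro r hr
        rw [subIcc] at hr
        have hinner : HasDerivAt (fun w : ℂ => w * h (w * t))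
            (1 * h ((r:ℂ)*t) + (r:ℂ) * (deriv h ((r:ℂ)*t) * t)) (r : ℂ) := by
          have h1 : HasDerivAt (fun w : ℂ => h (w * t)) (deriv h ((r:ℂ)*t) * t) (r:ℂ) := by
            have hd1 : DifferentiableAt ℂ h ((r:ℂ)*t) :=
              hh.differentiableAt (hS.mem_nhds (hbal t ht r hr))
            have hcomp := HasDerivAt.comp (x := (r:ℂ)) hd1.hasDerivAt
              (hasDerivAt_mul_const (x := (r:ℂ)) t)
            exact hcomp
          exact (hasDerivAt_id (r:ℂ)).mul h1
        have := hinner.comp_ofReal (z := r)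
        simpa using this
      apply intervalIntegral.integral_eq_sub_of_hasDerivAt hder2
      · apply ContinuousOn.intervalIntegrable
        rw [subIcc]
        exact (hcont1 t htball).add
          (((hcont2 t htball).mul (continuousOn_const (c := t))).congr
            (fun r hr => by simp only [Pi.mul_apply]; ring_nf))
    have hsplit : (∫ r in (0:ℝ)..1, (h ((r:ℂ)*t) + (r:ℂ) * (deriv h ((r:ℂ)*t) * t)))
        = (∫ r in (0:ℝ)..1, h ((r:ℂ)*t)) + ∫ r in (0:ℝ)..1, (r:ℂ) * (deriv h ((r:ℂ)*t) * t) := by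
      apply intervalIntegral.integral_add
      · apply ContinuousOn.intervalIntegrable; rw [subIcc]; exact hcont1 t htball
      · apply ContinuousOn.intervalIntegrable; rw [subIcc]
        exact ((hcont2 t htball).mul (continuousOn_const (c := t))).congr
          (fun r hr => by simp only [Pi.mul_apply]; ring_nf)
    have hmulswap : (∫ r in (0:ℝ)..1, (r:ℂ) * (deriv h ((r:ℂ)*t) * t))
        = t * ∫ r in (0:ℝ)..1, deriv h ((r:ℂ)*t) * (r:ℂ) := by
      rw [← intervalIntegral.integral_const_mul]
      apply intervalIntegral.integral_congr
      intro r hr; ring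
    rw [hsplit, hmulswap] at hFTC
    rw [one_mul]
    rw [one_mul, zero_mul, one_mul, sub_zero] at hFTC
    exact hFTC
  rw [hval] at hprod
  exact hprod

lemma differentiableAt_pderiv {D : Set (ℂ × ℂ)} (hD : IsOpen D) {g : ℂ → ℂ → ℂ}
    (hg : DifferentiableOn ℂ (fun p : ℂ × ℂ => g p.1 p.2) D) {τ₀ x : ℂ} (hm : (τ₀, x) ∈ D) :
    DifferentiableAt ℂ (fun τ => deriv (fun y => g τ y) x) τ₀ := by
  have hc : ContinuousOn (fun p : ℂ × ℂ => g p.1 p.2) D := hg.continuousOn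
  obtain ⟨ε', hε', hball⟩ := Metric.isOpen_iff.1 hD (τ₀, x) hm
  set ε : ℝ := ε' / 2 with hεdef
  have hε : 0 < ε := by positivity
  have hsub : ∀ τ ∈ Metric.closedBall τ₀ ε, ∀ z ∈ Metric.closedBall x ε, (τ, z) ∈ D := by
    intro τ hτ z hz
    apply hball
    rw [Metric.mem_ball, Prod.dist_eq]
    refine lt_of_le_of_lt (max_le (Metric.mem_closedBall.1 hτ) (Metric.mem_closedBall.1 hz)) ?_
    rw [hεdef]; linarith
  have hKc : IsCompact (Metric.closedBall τ₀ ε ×ˢ Metric.closedBall x ε) :=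
    (isCompact_closedBall _ _).prod (isCompact_closedBall _ _)
  obtain ⟨M, hM⟩ := hKc.exists_bound_of_continuousOn
    (hc.mono (fun p hp => hsub p.1 hp.1 p.2 hp.2))
  have hslice : ∀ τ ∈ Metric.ball τ₀ ε, ∀ z ∈ Metric.closedBall x ε,
      DifferentiableAt ℂ (fun τ' => g τ' z) τ := by
    intro τ hτ z hz
    have hj : DifferentiableAt ℂ (fun p : ℂ × ℂ => g p.1 p.2) (τ, z) :=
      hg.differentiableAt (hD.mem_nhds (hsub τ (Metric.ball_subset_closedBall hτ) z hz))
    exact hj.comp τ (f := fun τ' : ℂ => (τ', z)) (differentiableAt_id.prodMk (differentiableAt_const z))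
  set zc : ℝ → ℂ := circleMap x ε with hzc
  set K : ℝ → ℂ := fun θ => deriv (circleMap x ε) θ * (zc θ - x) ^ (-2 : ℤ) with hK
  have hKcont : Continuous K := by
    simp only [hK, deriv_circleMap]
    apply Continuous.mul ((continuous_circleMap 0 ε).mul continuous_const)
    apply Continuous.zpow₀ ((continuous_circleMap x ε).sub continuous_const)
    intro θ
    exact Or.inl (sub_ne_zero.2 (circleMap_ne_center hε.ne'))
  have hzmem : ∀ θ : ℝ, zc θ ∈ Metric.closedBall x ε := fun θ =>
    Metric.sphere_subset_closedBall (circleMap_mem_sphere x hε.le θ)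
  have hgcont : ∀ τ ∈ Metric.closedBall τ₀ ε, Continuous (fun θ : ℝ => g τ (zc θ)) := by
    intro τ hτ
    apply hc.comp_continuous (continuous_const.prodMk (continuous_circleMap x ε))
    intro θ; exact hsub τ hτ (zc θ) (hzmem θ)
  -- parametric differentiation of the circle integral
  have key := intervalIntegral.hasDerivAt_integral_of_dominated_loc_of_deriv_le
    (F := fun τ θ => K θ * g τ (zc θ))
    (F' := fun τ θ => K θ * deriv (fun τ' => g τ' (zc θ)) τ)
    (x₀ := τ₀) (bound := fun θ => ‖K θ‖ * (M / (ε/2))) (a := 0) (b := 2 * Real.pi)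
    (μ := volume) (s := Metric.ball τ₀ (ε/2)) (Metric.ball_mem_nhds τ₀ (by positivity))
    ?hF_meas ?hF_int ?hF'_meas ?h_bound ?bound_integrable ?h_diff
  case hF_meas =>
    filter_upwards [Metric.ball_mem_nhds τ₀ hε] with τ hτ
    exact (hKcont.mul (hgcont τ (Metric.ball_subset_closedBall hτ))).aestronglyMeasurable
  case hF_int =>
    exact (hKcont.mul (hgcont τ₀ (Metric.mem_closedBall_self hε.le))).intervalIntegrable _ _
  case hF'_meas =>
    obtain ⟨N, hN⟩ := exists_nat_gt (1/ε)
    have hN0 : (0:ℝ) < N := lt_trans (by positivity) hN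
    set c : ℕ → ℂ := fun n => (((((n:ℝ) + N + 1)⁻¹ : ℝ)) : ℂ) with hcdef
    set w : ℕ → ℂ := fun n => τ₀ + c n with hwdef
    have hcpos : ∀ n : ℕ, (0:ℝ) < ((n:ℝ) + N + 1)⁻¹ := fun n => by positivity
    have hcne : ∀ n, c n ≠ 0 := fun n => by
      simp only [hcdef, ne_eq, Complex.ofReal_eq_zero]
      exact (hcpos n).ne'
    have hcnorm : ∀ n, ‖c n‖ ≤ ε := by
      intro n
      rw [hcdef, Complex.norm_real, Real.norm_eq_abs, abs_of_pos (hcpos n)]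
      have h1 : (1:ℝ)/ε < (n:ℝ) + N + 1 := by
        have : (N:ℝ) ≤ (n:ℝ) + N := le_add_of_nonneg_left (Nat.cast_nonneg n)
        linarith
      have h4 := one_div_lt_one_div_of_lt (by positivity : (0:ℝ) < 1/ε) h1
      rw [one_div_one_div] at h4
      rw [inv_eq_one_div]
      exact h4.le
    have hwmem : ∀ n, w n ∈ Metric.closedBall τ₀ ε := by
      intro n
      rw [Metric.mem_closedBall, dist_eq_norm, hwdef]
      simpa using hcnorm n
    have hwne : ∀ n, w n ≠ τ₀ := by
      intro n hcon
      apply hcne n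
      have := congrArg (fun z => z - τ₀) hcon
      simpa [hwdef] using this
    have hctend : Tendsto c atTop (𝓝 0) := by
      rw [hcdef]
      rw [show ((0:ℂ)) = (((0:ℝ)):ℂ) by norm_num]
      apply (Complex.continuous_ofReal.tendsto _).comp
      apply tendsto_inv_atTop_zero.comp
      apply tendsto_atTop_add_const_right
      apply tendsto_atTop_add_const_right
      exact tendsto_natCast_atTop_atTop
    have hwtend : Tendsto w atTop (𝓝[≠] τ₀) := by
      apply tendsto_nhdsWithin_of_tendsto_nhds_of_eventually_within
      · rw [hwdef]; simpa using tendsto_const_nhds.add hctend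
      · exact Filter.Eventually.of_forall (fun n => hwne n)
    have hmeas : AEStronglyMeasurable (fun θ : ℝ => deriv (fun τ' => g τ' (zc θ)) τ₀)
        (volume.restrict (Set.uIoc 0 (2 * Real.pi))) := by
      apply aestronglyMeasurable_of_tendsto_ae (u := atTop)
        (f := fun (n : ℕ) (θ : ℝ) => (c n)⁻¹ * (g (w n) (zc θ) - g τ₀ (zc θ)))
      · intro n
        apply Continuous.aestronglyMeasurable
        exact continuous_const.mul
          ((hgcont (w n) (hwmem n)).sub (hgcont τ₀ (Metric.mem_closedBall_self hε.le)))
      · refine Filter.Eventually.of_forall (fun θ => ?_)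
        have hder : HasDerivAt (fun τ' => g τ' (zc θ))
            (deriv (fun τ' => g τ' (zc θ)) τ₀) τ₀ :=
          (hslice τ₀ (Metric.mem_ball_self hε) (zc θ) (hzmem θ)).hasDerivAt
        have hslope := (hasDerivAt_iff_tendsto_slope.1 hder).comp hwtend
        apply hslope.congr
        intro n
        rw [Function.comp_apply, slope_def_field]
        rw [hwdef]
        simp only [add_sub_cancel_left]
        rw [div_eq_inv_mul]
    exact hKcont.aestronglyMeasurable.mul hmeas
  case h_bound =>
    refine Filter.Eventually.of_forall (fun θ hθ τ hτ => ?_)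
    have hτc : dist τ τ₀ < ε/2 := Metric.mem_ball.1 hτ
    have hcb : ∀ τ' ∈ Metric.closedBall τ (ε/2), τ' ∈ Metric.closedBall τ₀ ε := by
      intro τ' hτ'
      rw [Metric.mem_closedBall] at *
      calc dist τ' τ₀ ≤ dist τ' τ + dist τ τ₀ := dist_triangle _ _ _
        _ ≤ ε/2 + ε/2 := add_le_add hτ' hτc.le
        _ = ε := by ring
    have hdcc : DiffContOnCl ℂ (fun τ' => g τ' (zc θ)) (Metric.ball τ (ε/2)) := by
      constructor
      · intro τ' hτ'
        refine (hslice τ' ?_ (zc θ) (hzmem θ)).differentiableWithinAt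
        rw [Metric.mem_ball]
        calc dist τ' τ₀ ≤ dist τ' τ + dist τ τ₀ := dist_triangle _ _ _
          _ < ε/2 + ε/2 := add_lt_add (Metric.mem_ball.1 hτ') hτc
          _ = ε := by ring
      · apply ContinuousOn.mono _ closure_ball_subset_closedBall
        exact hc.comp ((continuous_id.prodMk continuous_const).continuousOn)
          (fun τ' hτ' => hsub τ' (hcb τ' hτ') (zc θ) (hzmem θ))
    have hest : ‖deriv (fun τ' => g τ' (zc θ)) τ‖ ≤ M / (ε/2) := by
      apply Complex.norm_deriv_le_of_forall_mem_sphere_norm_le (by positivity) hdcc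
      intro τ' hτ'
      exact hM (τ', zc θ)
        ⟨hcb τ' (Metric.sphere_subset_closedBall hτ'), hzmem θ⟩
    rw [norm_mul]
    exact mul_le_mul_of_nonneg_left hest (norm_nonneg _)
  case bound_integrable =>
    exact (hKcont.norm.mul continuous_const).intervalIntegrable _ _
  case h_diff =>
    refine Filter.Eventually.of_forall (fun θ hθ τ hτ => ?_)
    have hd : DifferentiableAt ℂ (fun τ' => g τ' (zc θ)) τ :=
      hslice τ (Metric.ball_subset_ball (by linarith : ε/2 ≤ ε) hτ) (zc θ) (hzmem θ)
    exact hd.hasDerivAt.const_mul (K θ)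
  obtain ⟨-, hder⟩ := key
  have hrepr : ∀ τ ∈ Metric.ball τ₀ ε,
      deriv (fun y => g τ y) x
        = (2 * Real.pi * I : ℂ)⁻¹ * ∫ θ in (0:ℝ)..(2 * Real.pi), K θ * g τ (zc θ) := by
    intro τ hτ
    have hdcc : DiffContOnCl ℂ (fun y => g τ y) (Metric.ball x ε) := by
      constructor
      · intro y hy
        have hj : DifferentiableAt ℂ (fun p : ℂ × ℂ => g p.1 p.2) (τ, y) :=
          hg.differentiableAt (hD.mem_nhds (hsub τ (Metric.ball_subset_closedBall hτ) y
            (Metric.ball_subset_closedBall hy)))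
        exact (hj.comp y ((differentiableAt_const τ).prodMk differentiableAt_id)).differentiableWithinAt
      · apply ContinuousOn.mono _ closure_ball_subset_closedBall
        exact hc.comp ((continuous_const.prodMk continuous_id).continuousOn)
          (fun y hy => hsub τ (Metric.ball_subset_closedBall hτ) y hy)
    have hcf := hdcc.deriv_eq_smul_circleIntegral hε
    rw [eq_inv_mul_iff_mul_eq₀ Complex.two_pi_I_ne_zero, ← smul_eq_mul, ← hcf]
    simp only [circleIntegral, smul_eq_mul, hK, hzc]
    apply intervalIntegral.integral_congr
    intro θ hθ
    beta_reduce
    rw [zpow_neg, zpow_two]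
    ring
  have hΦdiff : DifferentiableAt ℂ
      (fun τ => (2 * Real.pi * I : ℂ)⁻¹ * ∫ θ in (0:ℝ)..(2 * Real.pi), K θ * g τ (zc θ)) τ₀ :=
    hder.differentiableAt.const_mul _
  apply hΦdiff.congr_of_eventuallyEq
  filter_upwards [Metric.ball_mem_nhds τ₀ hε] with τ hτ
  exact hrepr τ hτ
lemma slice_mem_S {O₀ : Set ℂ} {d a : ℝ} {t x : ℂ} : t ∈ {s : ℂ | (s, x) ∈ Dset O₀ d a} ↔ (t, x) ∈ Dset O₀ d a := Iff.rfl

lemma isOpen_slice {O₀ : Set ℂ} (hO₀ : IsOpen O₀) {d a : ℝ} (x : ℂ) :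
    IsOpen {s : ℂ | (s, x) ∈ Dset O₀ d a} :=
  (isOpen_Dset O₀ hO₀ d a).preimage (by continuity : Continuous fun s : ℂ => (s, x))

lemma balanced_slice {O₀ : Set ℂ} {d a : ℝ} {x : ℂ} :
    ∀ t ∈ {s : ℂ | (s, x) ∈ Dset O₀ d a}, ∀ r ∈ Set.Icc (0:ℝ) 1,
      (r : ℂ) * t ∈ {s : ℂ | (s, x) ∈ Dset O₀ d a} := by
  intro t ht r hr
  apply Dset_balanced ht
  rw [norm_mul, Complex.norm_real, Real.norm_eq_abs]
  calc |r| * ‖t‖ ≤ 1 * ‖t‖ :=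
        mul_le_mul_of_nonneg_right (abs_le.2 ⟨by linarith [hr.1], hr.2⟩) (norm_nonneg t)
    _ = ‖t‖ := one_mul _

lemma hasDerivAt_G {O₀ : Set ℂ} (hO₀ : IsOpen O₀) {d a : ℝ} {g : ℂ → ℂ → ℂ}
    (hg : DifferentiableOn ℂ (fun p : ℂ × ℂ => g p.1 p.2) (Dset O₀ d a))
    {t x : ℂ} (ht : (t, x) ∈ Dset O₀ d a) :
    HasDerivAt (segInt (fun τ => deriv (fun y => g τ y) x)) (deriv (fun y => g t y) x) t := by
  apply segInt_hasDerivAt (isOpen_slice hO₀ x) balanced_slice _ ht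
  intro τ hτ
  exact (differentiableAt_pderiv (isOpen_Dset O₀ hO₀ d a) hg hτ).differentiableWithinAt

lemma hasDerivAt_U {O₀ : Set ℂ} (hO₀ : IsOpen O₀) {d a : ℝ} {ξ f : ℂ → ℂ} {U g : ℂ → ℂ → ℂ}
    (hUd : DifferentiableOn ℂ (fun p : ℂ × ℂ => U p.1 p.2) (Dset O₀ d a))
    (hg : DifferentiableOn ℂ (fun p : ℂ × ℂ => g p.1 p.2) (Dset O₀ d a))
    (hfix : ∀ p ∈ Dset O₀ d a, Fcal ξ f U g p.1 p.2 = U p.1 p.2)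
    {t x : ℂ} (ht : (t, x) ∈ Dset O₀ d a) :
    HasDerivAt (fun s => U s x) (-(Fop ξ f U g t x)) t := by
  have hD := isOpen_Dset O₀ hO₀ d a
  have hSopen := isOpen_slice hO₀ (O₀ := O₀) (d := d) (a := a) x
  have hFdiff : DifferentiableOn ℂ (fun s => Fop ξ f U g s x)
      {s : ℂ | (s, x) ∈ Dset O₀ d a} := by
    intro s hs
    apply DifferentiableAt.differentiableWithinAt
    have hseg : DifferentiableAt ℂ (segInt (fun τ => deriv (fun y => g τ y) x)) s :=
      (hasDerivAt_G hO₀ hg hs).differentiableAt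
    have hUs : DifferentiableAt ℂ (fun s => U s x) s :=
      (hUd.differentiableAt (hD.mem_nhds hs)).comp s (f := fun s' : ℂ => (s', x))
        (differentiableAt_id.prodMk (differentiableAt_const x))
    simp only [Fop]
    exact (differentiableAt_const _).add ((hUs.pow 2).mul
      (hseg.add ((differentiableAt_id.mul_const _).add_const _)))
  have hFU : HasDerivAt (segInt (fun τ => Fop ξ f U g τ x)) (Fop ξ f U g t x) t :=
    segInt_hasDerivAt hSopen balanced_slice hFdiff ht
  apply (hFU.neg).congr_of_eventuallyEq
  filter_upwards [hSopen.mem_nhds ht] with s hs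
  exact (hfix (s, x) hs).symm

lemma U_ne_zero {O₀ : Set ℂ} {d a : ℝ} {U g : ℂ → ℂ → ℂ}
    (hUg : ∀ p ∈ Dset O₀ d a, p.1 ≠ 0 → U p.1 p.2 * (-2 / p.1 + g p.1 p.2) = 1)
    {t x : ℂ} (ht : (t, x) ∈ Dset O₀ d a) (ht0 : t ≠ 0) : U t x ≠ 0 :=
  left_ne_zero_of_mul_eq_one (hUg (t, x) ht ht0)

lemma inv_U_eq {O₀ : Set ℂ} {d a : ℝ} {U g : ℂ → ℂ → ℂ}
    (hUg : ∀ p ∈ Dset O₀ d a, p.1 ≠ 0 → U p.1 p.2 * (-2 / p.1 + g p.1 p.2) = 1)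
    {t x : ℂ} (ht : (t, x) ∈ Dset O₀ d a) (ht0 : t ≠ 0) :
    -2 / t + g t x = (U t x)⁻¹ :=
  eq_inv_of_mul_eq_one_left (by rw [mul_comm]; exact hUg (t, x) ht ht0)

lemma hasDerivAt_u {O₀ : Set ℂ} (hO₀ : IsOpen O₀) {d a : ℝ} {ξ f : ℂ → ℂ} {U g : ℂ → ℂ → ℂ}
    (hUd : DifferentiableOn ℂ (fun p : ℂ × ℂ => U p.1 p.2) (Dset O₀ d a))
    (hg : DifferentiableOn ℂ (fun p : ℂ × ℂ => g p.1 p.2) (Dset O₀ d a))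
    (hUg : ∀ p ∈ Dset O₀ d a, p.1 ≠ 0 → U p.1 p.2 * (-2 / p.1 + g p.1 p.2) = 1)
    (hfix : ∀ p ∈ Dset O₀ d a, Fcal ξ f U g p.1 p.2 = U p.1 p.2)
    {t x : ℂ} (ht : (t, x) ∈ Dset O₀ d a) (ht0 : t ≠ 0) :
    HasDerivAt (fun s => -2 / s + g s x + deriv ξ x)
      (Fop ξ f U g t x / (U t x) ^ 2) t := by
  have hSopen := isOpen_slice hO₀ (O₀ := O₀) (d := d) (a := a) x
  have hS'open : IsOpen ({s : ℂ | (s, x) ∈ Dset O₀ d a} \ {0}) :=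
    hSopen.sdiff isClosed_singleton
  have htS' : t ∈ {s : ℂ | (s, x) ∈ Dset O₀ d a} \ {0} := ⟨ht, ht0⟩
  have hVd := hasDerivAt_U hO₀ hUd hg hfix ht
  have hinv : HasDerivAt (fun s => (U s x)⁻¹ + deriv ξ x)
      (-(-Fop ξ f U g t x) / U t x ^ 2) t :=
    (hVd.inv (U_ne_zero hUg ht ht0)).add_const _
  rw [neg_neg] at hinv
  apply hinv.congr_of_eventuallyEq
  filter_upwards [hS'open.mem_nhds htS'] with s hs
  rw [inv_U_eq hUg hs.1 hs.2]
/-- If `U ∈ B¹_a` is a fixed point of `ℱ`, with `1/U = −2/t + g` off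
`{t = 0}`, then `u(t,x) := −2/t + g(t,x) + ξ'(x)` is holomorphic on `D_a ∖ {t = 0}`,
solves the transformed Burgers equation there, and
`lim_{t→0} [u_t − (1/2)(u − ξ'(x))²] = f(x)`. -/
theorem fixed_point_solves_burgers (O₀ : Set ℂ) (hO₀ : IsOpen O₀) (h0 : (0 : ℂ) ∈ O₀)
    (d : ℝ) (hd : 0 < d) (a : ℝ) (ha : 0 < a)
    (ξ f : ℂ → ℂ) (Ωc : Set ℂ) (hΩc : IsOpen Ωc) (hcl : closure (Oset O₀ d 1) ⊆ Ωc)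
    (hξ : DifferentiableOn ℂ ξ Ωc) (hf : DifferentiableOn ℂ f Ωc)
    (U g : ℂ → ℂ → ℂ) (hU : memB O₀ d a 1 U)
    (hg : DifferentiableOn ℂ (fun p : ℂ × ℂ => g p.1 p.2) (Dset O₀ d a))
    (hUg : ∀ p ∈ Dset O₀ d a, p.1 ≠ 0 → U p.1 p.2 * (-2 / p.1 + g p.1 p.2) = 1)
    (hfix : ∀ p ∈ Dset O₀ d a, Fcal ξ f U g p.1 p.2 = U p.1 p.2) :
    DifferentiableOn ℂ (fun p : ℂ × ℂ => -2 / p.1 + g p.1 p.2 + deriv ξ p.2)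
        (Dset O₀ d a \ {p : ℂ × ℂ | p.1 = 0}) ∧
    (∀ t x : ℂ, (t, x) ∈ Dset O₀ d a → t ≠ 0 →
      deriv (deriv (fun s => -2 / s + g s x + deriv ξ x)) t
        = ((-2 / t + g t x + deriv ξ x) - deriv ξ x)
            * deriv (fun s => -2 / s + g s x + deriv ξ x) t
          + deriv (fun y => -2 / t + g t y + deriv ξ y) x) ∧
    (∀ x : ℂ, ((0 : ℂ), x) ∈ Dset O₀ d a →
      Tendsto
        (fun t => deriv (fun s => -2 / s + g s x + deriv ξ x) t
          - (1 / 2) * ((-2 / t + g t x + deriv ξ x) - deriv ξ x) ^ 2)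
        (𝓝[≠] (0 : ℂ)) (𝓝 (f x))) := by
  have hD := isOpen_Dset O₀ hO₀ d a
  have hξa : AnalyticOnNhd ℂ (deriv ξ) Ωc := (hξ.analyticOnNhd hΩc).deriv
  refine ⟨?_, ?_, ?_⟩
  · -- Part 1 : holomorphy off {t = 0}
    intro p hp
    apply DifferentiableAt.differentiableWithinAt
    have hp0 : p.1 ≠ 0 := hp.2
    have h1 : DifferentiableAt ℂ (fun q : ℂ × ℂ => -2 / q.1) p := by
      have hone : DifferentiableAt ℂ (fun z : ℂ => -2 / z) p.1 :=
        (differentiableAt_const _).div differentiableAt_id hp0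
      exact hone.comp p differentiableAt_fst
    have h2 : DifferentiableAt ℂ (fun q : ℂ × ℂ => g q.1 q.2) p :=
      hg.differentiableAt (hD.mem_nhds hp.1)
    have hx : p.2 ∈ Ωc := Dset_snd_mem hd.le hcl hp.1
    have h3 : DifferentiableAt ℂ (fun q : ℂ × ℂ => deriv ξ q.2) p :=
      ((hξa p.2 hx).differentiableAt).comp p differentiableAt_snd
    exact (h1.add h2).add h3
  · -- Part 2 : the Burgers-type equation
    intro t x htx ht0
    have hVne := U_ne_zero hUg htx ht0
    have hu1 := hasDerivAt_u hO₀ hU.1 hg hUg hfix htx ht0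
    have hSopen := isOpen_slice hO₀ (O₀ := O₀) (d := d) (a := a) x
    have hS'open : IsOpen ({s : ℂ | (s, x) ∈ Dset O₀ d a} \ {0}) :=
      hSopen.sdiff isClosed_singleton
    have htS' : t ∈ {s : ℂ | (s, x) ∈ Dset O₀ d a} \ {0} := ⟨htx, ht0⟩
    have hev1 : (deriv (fun s => -2 / s + g s x + deriv ξ x)) =ᶠ[𝓝 t]
        (fun s => Fop ξ f U g s x / (U s x) ^ 2) := by
      filter_upwards [hS'open.mem_nhds htS'] with s hs
      exact (hasDerivAt_u hO₀ hU.1 hg hUg hfix hs.1 hs.2).deriv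
    rw [hev1.deriv_eq]
    have hev2 : (fun s => Fop ξ f U g s x / (U s x) ^ 2) =ᶠ[𝓝 t]
        (fun s => 1/2 * ((U s x)⁻¹) ^ 2 +
          (segInt (fun τ => deriv (fun y => g τ y) x) s + (s * deriv (deriv ξ) x + f x))) := by
      filter_upwards [hS'open.mem_nhds htS'] with s hs
      have hne := U_ne_zero hUg hs.1 hs.2
      simp only [Fop]
      field_simp
    rw [hev2.deriv_eq]
    have hVd := hasDerivAt_U hO₀ hU.1 hg hfix htx
    have h1 : HasDerivAt (fun s => (U s x)⁻¹)
        (-(-Fop ξ f U g t x) / U t x ^ 2) t := hVd.inv hVne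
    rw [neg_neg] at h1
    have h2 := (h1.pow 2).const_mul (1/2 : ℂ)
    have h4 := hasDerivAt_G hO₀ hg htx
    have h5 : HasDerivAt (fun s : ℂ => s * deriv (deriv ξ) x + f x)
        (deriv (deriv ξ) x) t := (hasDerivAt_mul_const _).add_const _
    have htot := h2.add (h4.add h5)
    refine htot.deriv.trans ?_
    have hu1d : deriv (fun s => -2 / s + g s x + deriv ξ x) t
        = Fop ξ f U g t x / U t x ^ 2 := hu1.deriv
    rw [hu1d]
    have hxΩ : x ∈ Ωc := Dset_snd_mem hd.le hcl htx
    have hgx : DifferentiableAt ℂ (fun y => g t y) x :=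
      (hg.differentiableAt (hD.mem_nhds htx)).comp x
        ((differentiableAt_const t).prodMk differentiableAt_id)
    have hξ2 : DifferentiableAt ℂ (deriv ξ) x := (hξa x hxΩ).differentiableAt
    have hderx : deriv (fun y => -2 / t + g t y + deriv ξ y) x
        = deriv (fun y => g t y) x + deriv (deriv ξ) x := by
      rw [deriv_fun_add (f := fun y => -2 / t + g t y) ((differentiableAt_const _).add hgx) hξ2, deriv_const_add]
    rw [hderx, inv_U_eq hUg htx ht0]
    have h2ne : (U t x) ^ 2 ≠ 0 := pow_ne_zero 2 hVne
    field_simp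
    rw [show (2:ℕ) - 1 = 1 from rfl, pow_one]
    linear_combination (2 * Fop ξ f U g t x) * (mul_one_div_cancel hVne)
  · -- Part 3 : the limit as t → 0
    intro x hx0
    have hSopen := isOpen_slice hO₀ (O₀ := O₀) (d := d) (a := a) x
    have h0S : (0 : ℂ) ∈ {s : ℂ | (s, x) ∈ Dset O₀ d a} := hx0
    have hG := hasDerivAt_G hO₀ hg hx0
    have hc2 : Tendsto (fun t : ℂ => t * deriv (deriv ξ) x + f x) (𝓝 0)
        (𝓝 ((0 : ℂ) * deriv (deriv ξ) x + f x)) :=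
      ((continuous_id.mul continuous_const).add continuous_const).tendsto 0
    have hlim := (hG.continuousAt.tendsto.add hc2)
    have hval : segInt (fun τ => deriv (fun y => g τ y) x) 0 +
        ((0 : ℂ) * deriv (deriv ξ) x + f x) = f x := by simp [segInt]
    rw [hval] at hlim
    apply Tendsto.congr' _ (hlim.mono_left nhdsWithin_le_nhds)
    filter_upwards [mem_nhdsWithin_of_mem_nhds (hSopen.mem_nhds h0S),
      self_mem_nhdsWithin] with t htS ht0'
    have ht0 : t ≠ 0 := ht0'
    have hne := U_ne_zero hUg htS ht0
    have hd1 : deriv (fun s => -2 / s + g s x + deriv ξ x) t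
        = Fop ξ f U g t x / U t x ^ 2 :=
      (hasDerivAt_u hO₀ hU.1 hg hUg hfix htS ht0).deriv
    rw [hd1, inv_U_eq hUg htS ht0]
    simp only [Fop]
    field_simp
    ring
end

section
/- With the domain setup below, let n ≥ 1 be an integer and let a, K, L be positive real numbers with a < min{1/6, 1/(6K)} and aⁿ ≤ 1/(12L). Let U₁, U₂ ∈ B^K_a and assume v := U₂ − U₁ satisfies |v(t,x)| ≤ L|t|^{n+1} for all (t,x) ∈ D_a. Then for every (t,x) ∈ D_a with t ≠ 0, both U₁(t,x) and U₂(t,x) are nonzero and |U₁(t,x)/U₂(t,x) − 1| ≤ 4L|t|ⁿ. -/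
open Complex Set Filter Topology

/-- Sub-claim `1/U₂ = (1/U₁)(1 + Oⁿ_{4L})` of Lemma 3: under the stated
smallness conditions, `U₁, U₂` are nonvanishing off `{t = 0}` and `|U₁/U₂ − 1| ≤ 4L|t|ⁿ`. -/
theorem ratio_estimate (O₀ : Set ℂ) (hO₀ : IsOpen O₀) (h0 : (0 : ℂ) ∈ O₀)
    (d : ℝ) (hd : 0 < d) (n : ℕ) (hn : 1 ≤ n) (a K L : ℝ)
    (ha : 0 < a) (hK : 0 < K) (hL : 0 < L)
    (haK : a < min (1 / 6) (1 / (6 * K))) (han : a ^ n ≤ 1 / (12 * L))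
    (U₁ U₂ : ℂ → ℂ → ℂ) (hU₁ : memB O₀ d a K U₁) (hU₂ : memB O₀ d a K U₂)
    (hv : ∀ p ∈ Dset O₀ d a,
      ‖U₂ p.1 p.2 - U₁ p.1 p.2‖ ≤ L * ‖p.1‖ ^ (n + 1)) :
    ∀ p ∈ Dset O₀ d a, p.1 ≠ 0 →
      U₁ p.1 p.2 ≠ 0 ∧ U₂ p.1 p.2 ≠ 0 ∧
      ‖U₁ p.1 p.2 / U₂ p.1 p.2 - 1‖ ≤ 4 * L * ‖p.1‖ ^ n := by
  intro p hp ht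
  set t := p.1
  have htpos : 0 < ‖t‖ := norm_pos_iff.mpr ht
  have hta : ‖t‖ < a := by
    obtain ⟨s, hs, h1, -⟩ := hp
    calc ‖t‖ < a * (1 - s) := h1
      _ ≤ a * 1 := by nlinarith [hs.1]
      _ = a := by ring
  have haK2 : a < 1 / (6 * K) := lt_of_lt_of_le haK (min_le_right _ _)
  have hKa : K * a < 1 / 6 := by
    rw [lt_div_iff₀ (by positivity)] at haK2
    nlinarith
  -- lower bound on |U_i|
  have key : ∀ U : ℂ → ℂ → ℂ, memB O₀ d a K U →
      ‖t‖ / 3 ≤ ‖U t p.2‖ := by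
    intro U hU
    have h2 := hU.2 p hp
    have h3 : ‖t / 2‖ ≤ ‖U t p.2 + t / 2‖
        + ‖U t p.2‖ := by
      calc ‖t/2‖ = ‖(U t p.2 + t/2) + (-(U t p.2))‖ := by
            ring_nf
        _ ≤ ‖U t p.2 + t/2‖ + ‖-(U t p.2)‖ :=
            norm_add_le _ _
        _ = ‖U t p.2 + t/2‖ + ‖U t p.2‖ := by
            rw [norm_neg]
    have habs2 : ‖t / 2‖ = ‖t‖ / 2 := by
      simp [map_div₀]
    have hK2 : K * ‖t‖ ^ 2 ≤ K * a * ‖t‖ := by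
      have h := mul_le_mul_of_nonneg_left hta.le
        (mul_nonneg hK.le (norm_nonneg t))
      nlinarith [h]
    nlinarith [h2, h3]
  have hU1lb := key U₁ hU₁
  have hU2lb := key U₂ hU₂
  have hU1ne : U₁ t p.2 ≠ 0 := by
    intro h
    rw [h] at hU1lb
    simp at hU1lb
    nlinarith
  have hU2ne : U₂ t p.2 ≠ 0 := by
    intro h
    rw [h] at hU2lb
    simp at hU2lb
    nlinarith
  refine ⟨hU1ne, hU2ne, ?_⟩
  have hdiff := hv p hp
  have heq : U₁ t p.2 / U₂ t p.2 - 1 = (U₁ t p.2 - U₂ t p.2) / U₂ t p.2 := by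
    field_simp
  rw [heq, norm_div]
  have hnum : ‖U₁ t p.2 - U₂ t p.2‖ ≤ L * ‖t‖ ^ (n + 1) := by
    rw [show U₁ t p.2 - U₂ t p.2 = -(U₂ t p.2 - U₁ t p.2) by ring, norm_neg]
    exact hdiff
  have hU2pos : 0 < ‖U₂ t p.2‖ := lt_of_lt_of_le (by linarith) hU2lb
  rw [div_le_iff₀ hU2pos]
  have hpow : L * ‖t‖ ^ (n + 1) = (3 * L * ‖t‖ ^ n) * (‖t‖ / 3) := by
    rw [pow_succ]; ring
  calc ‖U₁ t p.2 - U₂ t p.2‖ ≤ L * ‖t‖ ^ (n + 1) := hnum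
    _ = (3 * L * ‖t‖ ^ n) * (‖t‖ / 3) := hpow
    _ ≤ (4 * L * ‖t‖ ^ n) * ‖U₂ t p.2‖ := by
        apply mul_le_mul _ hU2lb (by positivity) (by positivity)
        nlinarith [pow_pos htpos n]
end

section
/- With the domain setup below, let N ≥ 0 and n ≥ 0 be integers, let k > 0, let 0 < a < d, and set a* := a(1 − 2^{−(n+2)}). Assume g : D_a → ℂ is holomorphic with |g(t,x)| ≤ k|t|^N for all (t,x) ∈ D_a. Then for all (t,x) ∈ D_{a*} one has |∫₀ᵗ ∂g/∂x(τ,x) dτ| ≤ (n+2)·k·|t|^N, the integral being taken along the straight segment from 0 to t. -/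
open Complex Set Filter Topology

lemma cauchy_bound (O₀ : Set ℂ) (d : ℝ) (hd : 0 < d) (N : ℕ) (k a : ℝ)
    (ha : 0 < a) (had : a < d) (g : ℂ → ℂ → ℂ)
    (hg : DifferentiableOn ℂ (fun p : ℂ × ℂ => g p.1 p.2) (Dset O₀ d a))
    (hgk : ∀ p ∈ Dset O₀ d a, ‖g p.1 p.2‖ ≤ k * ‖p.1‖ ^ N)
    (s : ℝ) (hs0 : 0 ≤ s) (hs1 : s < 1) (x : ℂ) (hxs : x ∈ Oset O₀ d s)
    (τ : ℂ) (hτ : ‖τ‖ < a * (1 - s)) :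
    ‖deriv (fun y => g τ y) x‖ ≤ k * ‖τ‖ ^ N / (a * (1 - s) - ‖τ‖) := by
  set m : ℝ := ‖τ‖ with hm
  have hm0 : 0 ≤ m := norm_nonneg τ
  set ρ : ℝ := a * (1 - s) - m with hρdef
  have hρ0 : 0 < ρ := by simp only [hρdef]; linarith
  set σ : ℝ := ((s + ρ / d) + min 1 (1 - m / a)) / 2 with hσdef
  have h1 : s + ρ / d < 1 := by
    have : ρ / d < 1 - s := by
      rw [div_lt_iff₀ hd]
      nlinarith [mul_lt_mul_of_pos_right had (by linarith : (0:ℝ) < 1 - s)]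
    linarith
  have h2 : s + ρ / d < 1 - m / a := by
    have e1 : 1 - m / a - s = ρ / a := by
      rw [hρdef]; field_simp; ring
    have hda : ρ / d < ρ / a := div_lt_div_of_pos_left hρ0 ha had
    linarith
  have hσgt : s + ρ / d < σ := by
    have : s + ρ / d < min 1 (1 - m / a) := lt_min h1 h2
    simp only [hσdef]; linarith
  have hσ1 : σ ≤ 1 := by
    have : min 1 (1 - m / a) ≤ 1 := min_le_left _ _
    simp only [hσdef]; linarith
  have hσ0 : 0 ≤ σ := by
    have h3 : 0 ≤ ρ / d := le_of_lt (div_pos hρ0 hd)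
    have h4 : s + ρ / d ≤ min 1 (1 - m / a) := le_of_lt (lt_min h1 h2)
    simp only [hσdef]; nlinarith
  have hτσ : m < a * (1 - σ) := by
    have : σ < 1 - m / a := by
      have : min 1 (1 - m / a) ≤ 1 - m / a := min_le_right _ _
      simp only [hσdef]; linarith
    have := (div_lt_iff₀ ha).mp (by linarith : m / a < 1 - σ)
    linarith [this]
  have hsub : ∀ y ∈ Metric.closedBall x ρ, (τ, y) ∈ Dset O₀ d a := by
    intro y hy
    refine ⟨σ, ⟨hσ0, hσ1⟩, by simpa using hτσ, Or.inr ?_⟩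
    have h3 : Metric.infDist x O₀ ≤ s * d := by
      rcases hxs with h | h
      · rw [Metric.infDist_zero_of_mem h]; positivity
      · linarith
    have h4 : Metric.infDist y O₀ ≤ Metric.infDist x O₀ + dist y x :=
      Metric.infDist_le_infDist_add_dist
    have h5 : dist y x ≤ ρ := Metric.mem_closedBall.mp hy
    have h6 : s * d + ρ < σ * d := by
      have := (div_lt_iff₀ hd).mp (by linarith : ρ / d < σ - s)
      nlinarith
    linarith
  have hdiff : DifferentiableOn ℂ (fun y => g τ y) (Metric.closedBall x ρ) := by
    have : (fun y => g τ y) = (fun p : ℂ × ℂ => g p.1 p.2) ∘ (fun y => (τ, y)) := rfl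
    rw [this]
    exact hg.comp (((differentiable_const τ).prodMk differentiable_id).differentiableOn) hsub
  have hdc : DiffContOnCl ℂ (fun y => g τ y) (Metric.ball x ρ) := by
    apply DifferentiableOn.diffContOnCl
    rwa [closure_ball x hρ0.ne']
  have hb : ∀ z ∈ Metric.sphere x ρ, ‖g τ z‖ ≤ k * m ^ N := by
    intro z hz
    have hz' : (τ, z) ∈ Dset O₀ d a := hsub z (Metric.sphere_subset_closedBall hz)
    have := hgk (τ, z) hz'
    simpa using this
  have := Complex.norm_deriv_le_of_forall_mem_sphere_norm_le hρ0 hdc hb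
  simpa [hρdef] using this

/-- Lemma 2 specialized to `ε = 2^{−(n+2)}`, using `a < d` and
`ln(2^{n+2}) ≤ n + 2`: if `|g(t,x)| ≤ k|t|^N` on `D_a`, then on `D_{a*}` with
`a* = a(1 − 2^{−(n+2)})` one has `|∫₀ᵗ ∂g/∂x(τ,x) dτ| ≤ (n+2)·k·|t|^N`. -/
theorem lemma2_specialized (O₀ : Set ℂ) (hO₀ : IsOpen O₀) (h0 : (0 : ℂ) ∈ O₀)
    (d : ℝ) (hd : 0 < d) (N n : ℕ) (k a : ℝ) (hk : 0 < k) (ha : 0 < a) (had : a < d)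
    (g : ℂ → ℂ → ℂ)
    (hg : DifferentiableOn ℂ (fun p : ℂ × ℂ => g p.1 p.2) (Dset O₀ d a))
    (hgk : ∀ p ∈ Dset O₀ d a, ‖g p.1 p.2‖ ≤ k * ‖p.1‖ ^ N) :
    ∀ p ∈ Dset O₀ d (a * (1 - (1 / 2) ^ (n + 2))),
      ‖segInt (fun τ => deriv (fun y => g τ y) p.2) p.1‖
        ≤ (n + 2) * k * ‖p.1‖ ^ N := by
  intro p hp
  obtain ⟨s, ⟨hs0, hs1'⟩, hts, hxs⟩ := hp
  set t : ℂ := p.1 with htdef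
  set x : ℂ := p.2 with hxdef
  set ε : ℝ := (1/2 : ℝ) ^ (n+2) with hεdef
  have hε0 : 0 < ε := by positivity
  have hε1 : ε < 1 := by
    rw [hεdef]
    apply pow_lt_one₀ (by norm_num) (by norm_num)
    omega
  have habs0 : (0:ℝ) ≤ ‖t‖ := norm_nonneg t
  have hs1 : s < 1 := by
    by_contra hcon
    push_neg at hcon
    nlinarith [hts, mul_pos ha (sub_pos.2 hε1)]
  set A : ℝ := a * (1 - s) with hAdef
  have hA0 : 0 < A := mul_pos ha (by linarith)
  have hcA : ‖t‖ < A * (1 - ε) := by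
    calc ‖t‖ < a * (1 - ε) * (1 - s) := hts
    _ = A * (1 - ε) := by rw [hAdef]; ring
  have hcA' : ‖t‖ < A := by nlinarith
  by_cases ht : t = 0
  · simp only [ht, segInt, zero_mul, norm_zero]
    positivity
  set c : ℝ := ‖t‖ with hcdef
  have hcpos : 0 < c := norm_pos_iff.mpr ht
  have key : ∀ r ∈ Icc (0:ℝ) 1,
      ‖deriv (fun y => g ((r:ℂ)*t) y) x‖ ≤ k * c ^ N / (A - r * c) := by
    intro r hr
    have habs : ‖(r:ℂ)*t‖ = r * c := by
      rw [norm_mul, Complex.norm_real, Real.norm_eq_abs, _root_.abs_of_nonneg hr.1]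
    have h1 : ‖(r:ℂ)*t‖ < a * (1 - s) := by
      rw [habs]
      nlinarith [hr.1, hr.2]
    have hkey := cauchy_bound O₀ d hd N k a ha had g hg hgk s hs0 hs1 x hxs ((r:ℂ)*t) h1
    rw [habs] at hkey
    refine hkey.trans ?_
    have hden : 0 < A - r * c := by nlinarith [hr.1, hr.2]
    have h2 : r * c ≤ c := by nlinarith [hr.1, hr.2]
    have h3 : (0:ℝ) ≤ r * c := mul_nonneg hr.1 hcpos.le
    gcongr
  have hden : ∀ r ∈ Icc (0:ℝ) 1, 0 < A - r * c := by
    intro r hr; nlinarith [hr.1, hr.2]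
  set G : ℝ → ℝ := fun r => k * c ^ N / (A - r * c) with hGdef
  have hGcont : ContinuousOn G (Icc 0 1) := by
    apply ContinuousOn.div continuousOn_const (by fun_prop)
    intro r hr; exact (hden r hr).ne'
  have hGint : IntervalIntegrable G MeasureTheory.volume 0 1 := by
    apply ContinuousOn.intervalIntegrable
    rwa [uIcc_of_le (by norm_num : (0:ℝ) ≤ 1)]
  have hnorm : ‖∫ r in (0:ℝ)..1, deriv (fun y => g ((r:ℂ)*t) y) x‖
      ≤ |∫ r in (0:ℝ)..1, G r| := by
    apply intervalIntegral.norm_integral_le_abs_of_norm_le _ hGint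
    filter_upwards [MeasureTheory.ae_restrict_mem measurableSet_uIoc] with r hr
    have hr' : r ∈ Icc (0:ℝ) 1 := by
      rw [uIoc_of_le (by norm_num : (0:ℝ) ≤ 1)] at hr
      exact ⟨hr.1.le, hr.2⟩
    exact key r hr'
  set B : ℝ := k * c ^ N / c with hBdef
  have hB0 : 0 ≤ B := by positivity
  have hderivF : ∀ r ∈ uIcc (0:ℝ) 1,
      HasDerivAt (fun r : ℝ => -(B * Real.log (A - r * c))) (G r) r := by
    intro r hr
    rw [uIcc_of_le (by norm_num : (0:ℝ) ≤ 1)] at hr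
    have h0 : A - r * c ≠ 0 := (hden r hr).ne'
    have hu : HasDerivAt (fun r : ℝ => A - r * c) (-c) r := by
      simpa using ((hasDerivAt_id r).mul_const c).const_sub A
    have hl := (hu.log h0).const_mul B
    have := hl.neg
    refine HasDerivAt.congr_deriv this ?_
    rw [hGdef, hBdef]
    field_simp
  have hFTC := intervalIntegral.integral_eq_sub_of_hasDerivAt hderivF hGint
  have hIG0 : 0 ≤ ∫ r in (0:ℝ)..1, G r := by
    apply intervalIntegral.integral_nonneg (by norm_num)
    intro u hu
    exact le_of_lt (div_pos (by positivity) (hden u hu))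
  have hlog : Real.log A - Real.log (A - c) ≤ (n : ℝ) + 2 := by
    have hAc : A * ε ≤ A - c := by nlinarith
    have h2 : Real.log (A * ε) ≤ Real.log (A - c) :=
      Real.log_le_log (by positivity) hAc
    have h3 : Real.log (A * ε) = Real.log A - ((n : ℝ) + 2) * Real.log 2 := by
      rw [Real.log_mul hA0.ne' hε0.ne', hεdef, Real.log_pow, one_div, Real.log_inv]
      push_cast; ring
    have h5 : Real.log 2 ≤ 1 := by
      have := Real.log_two_lt_d9
      linarith
    nlinarith [mul_le_mul_of_nonneg_left h5 (by positivity : (0:ℝ) ≤ (n : ℝ) + 2)]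
  have hval : ∫ r in (0:ℝ)..1, G r = B * (Real.log A - Real.log (A - c)) := by
    rw [hFTC]
    norm_num
    ring
  calc ‖segInt (fun τ => deriv (fun y => g τ y) x) t‖
      = c * ‖∫ r in (0:ℝ)..1, deriv (fun y => g ((r:ℂ)*t) y) x‖ := by
        simp only [segInt, norm_mul, hcdef]
    _ ≤ c * |∫ r in (0:ℝ)..1, G r| := by
        apply mul_le_mul_of_nonneg_left _ hcpos.le
        exact hnorm
    _ = c * (B * (Real.log A - Real.log (A - c))) := by
        rw [_root_.abs_of_nonneg hIG0, hval]
    _ ≤ c * (B * ((n : ℝ) + 2)) := by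
        apply mul_le_mul_of_nonneg_left (mul_le_mul_of_nonneg_left hlog hB0) hcpos.le
    _ = ((n : ℝ) + 2) * k * c ^ N := by
        rw [hBdef]
        field_simp
end
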